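/- arXiv:math/0301274 — 5 statements merged into one kernel-verified Lean document; each statement's English description precedes it below -/
import Mathlib

section
/- Let D be a polynomial with integer coefficients in the m+2 variables k, x_0, x_1, …, x_m, and let x be a real number with 0 < x < 1. Suppose that for all positive integers k and N: there exist positive integers x_1, …, x_m with D(k, N, x_1, …, x_m) = 0 if and only if (N : ℝ)/2^k < x. Then for every positive integer k with 2^k·x not an integer, the set of N for which D(k, N, ·) = 0 has a solution in positive integers is contained in {1, …, 2^k − 1}, has fewer than 2^k elements, and has odd cardinality if and only if the k-th binary digit of x equals 1. -/
/-- The `k`-th binary digit of a real number `x`, i.e. `⌊2^k·x⌋ mod 2`. -/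
noncomputable def binaryDigit (x : ℝ) (k : ℕ) : ℤ := ⌊(2:ℝ)^k * x⌋ % 2

theorem diophantine_family_parity (m : ℕ) (D : MvPolynomial (Fin (m+2)) ℤ)
    (x : ℝ) (hx0 : 0 < x) (hx1 : x < 1)
    (hD : ∀ k N : ℕ, 0 < k → 0 < N →
      ((∃ xs : Fin m → ℤ, (∀ i, 0 < xs i) ∧
          MvPolynomial.eval (Fin.cons (k:ℤ) (Fin.cons (N:ℤ) xs)) D = 0) ↔
        (N:ℝ)/2^k < x))
    (k : ℕ) (hk : 0 < k) (hni : ∀ n : ℤ, (2:ℝ)^k * x ≠ (n:ℝ)) :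
    {N : ℕ | 0 < N ∧ ∃ xs : Fin m → ℤ, (∀ i, 0 < xs i) ∧
        MvPolynomial.eval (Fin.cons (k:ℤ) (Fin.cons (N:ℤ) xs)) D = 0} ⊆
      Set.Icc 1 (2^k - 1) ∧
    {N : ℕ | 0 < N ∧ ∃ xs : Fin m → ℤ, (∀ i, 0 < xs i) ∧
        MvPolynomial.eval (Fin.cons (k:ℤ) (Fin.cons (N:ℤ) xs)) D = 0}.ncard < 2^k ∧
    (Odd {N : ℕ | 0 < N ∧ ∃ xs : Fin m → ℤ, (∀ i, 0 < xs i) ∧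
        MvPolynomial.eval (Fin.cons (k:ℤ) (Fin.cons (N:ℤ) xs)) D = 0}.ncard ↔
      binaryDigit x k = 1) := by
  set y : ℝ := (2:ℝ)^k * x with hy
  have hy0 : 0 < y := by positivity
  have hf0 : 0 ≤ ⌊y⌋ := Int.floor_nonneg.2 hy0.le
  have hpow : (0:ℝ) < (2:ℝ)^k := by positivity
  -- floor y < 2^k
  have hylt : y < (2:ℝ)^k := by
    calc y < (2:ℝ)^k * 1 := by exact mul_lt_mul_of_pos_left hx1 hpow
    _ = (2:ℝ)^k := mul_one _
  have hflt : ⌊y⌋ < (2:ℕ)^k := by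
    have := Int.floor_le y
    have : (⌊y⌋ : ℝ) < (2:ℝ)^k := lt_of_le_of_lt (Int.floor_le y) hylt
    exact_mod_cast (by push_cast at this ⊢; exact this : (⌊y⌋:ℝ) < ((2^k : ℕ) : ℝ))
  -- characterize the set
  have hset : {N : ℕ | 0 < N ∧ ∃ xs : Fin m → ℤ, (∀ i, 0 < xs i) ∧
        MvPolynomial.eval (Fin.cons (k:ℤ) (Fin.cons (N:ℤ) xs)) D = 0}
      = Set.Icc 1 (⌊y⌋.toNat) := by
    ext N
    simp only [Set.mem_setOf_eq, Set.mem_Icc]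
    constructor
    · rintro ⟨hN, hex⟩
      have h := (hD k N hk hN).1 hex
      have hlt : (N:ℝ) < y := by
        rw [div_lt_iff₀ hpow] at h
        linarith [h]
      have hNle : (N:ℤ) ≤ ⌊y⌋ := Int.le_floor.2 hlt.le
      exact ⟨hN, by omega⟩
    · rintro ⟨h1, h2⟩
      have hN : 0 < N := h1
      refine ⟨hN, (hD k N hk hN).2 ?_⟩
      have hNle : (N:ℤ) ≤ ⌊y⌋ := by omega
      have hle : (N:ℝ) ≤ y := le_trans (by exact_mod_cast hNle) (Int.floor_le y)
      have hne : (N:ℝ) ≠ y := fun h => hni N h.symm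
      have hlt : (N:ℝ) < y := lt_of_le_of_ne hle hne
      rw [div_lt_iff₀ hpow]
      linarith
  rw [hset]
  have hcard : (Set.Icc 1 (⌊y⌋.toNat)).ncard = ⌊y⌋.toNat := by
    have : Set.Icc 1 ⌊y⌋.toNat = ↑(Finset.Icc 1 ⌊y⌋.toNat) := by simp
    rw [this, Set.ncard_coe_finset, Nat.card_Icc]; omega
  refine ⟨?_, ?_, ?_⟩
  · intro N hN
    simp only [Set.mem_Icc] at hN ⊢
    omega
  · rw [hcard]; omega
  · rw [hcard, binaryDigit, ← hy]
    rw [Nat.odd_iff]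
    omega
end

section
/- Let D be a polynomial with integer coefficients in the m+2 variables k, x_0, x_1, …, x_m, and let x be a real number with 0 < x < 1. Suppose that for all positive integers k and N: there exist positive integers x_1, …, x_m with D(k, N, x_1, …, x_m) = 0 if and only if (N : ℝ)/2^k < x. Define P(x_0, …, x_m) = x_0·(1 − D(k, x_0, x_1, …, x_m)^2). Then for every positive integer k with 2^k·x not an integer, the set of positive integer values assumed by P as x_0, …, x_m range over positive integers is contained in {1, …, 2^k − 1}, has fewer than 2^k elements, and has odd cardinality if and only if the k-th binary digit of x equals 1. -/
theorem polynomial_positive_values_parity (m : ℕ) (D : MvPolynomial (Fin (m+2)) ℤ)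
    (x : ℝ) (hx0 : 0 < x) (hx1 : x < 1)
    (hD : ∀ k N : ℕ, 0 < k → 0 < N →
      ((∃ xs : Fin m → ℤ, (∀ i, 0 < xs i) ∧
          MvPolynomial.eval (Fin.cons (k:ℤ) (Fin.cons (N:ℤ) xs)) D = 0) ↔
        (N:ℝ)/2^k < x))
    (k : ℕ) (hk : 0 < k) (hni : ∀ n : ℤ, (2:ℝ)^k * x ≠ (n:ℝ)) :
    {v : ℤ | 0 < v ∧ ∃ x0 : ℤ, 0 < x0 ∧ ∃ xs : Fin m → ℤ, (∀ i, 0 < xs i) ∧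
        x0 * (1 - (MvPolynomial.eval (Fin.cons (k:ℤ) (Fin.cons x0 xs)) D)^2) = v} ⊆
      Set.Icc 1 ((2:ℤ)^k - 1) ∧
    {v : ℤ | 0 < v ∧ ∃ x0 : ℤ, 0 < x0 ∧ ∃ xs : Fin m → ℤ, (∀ i, 0 < xs i) ∧
        x0 * (1 - (MvPolynomial.eval (Fin.cons (k:ℤ) (Fin.cons x0 xs)) D)^2) = v}.ncard
      < 2^k ∧
    (Odd {v : ℤ | 0 < v ∧ ∃ x0 : ℤ, 0 < x0 ∧ ∃ xs : Fin m → ℤ, (∀ i, 0 < xs i) ∧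
        x0 * (1 - (MvPolynomial.eval (Fin.cons (k:ℤ) (Fin.cons x0 xs)) D)^2) = v}.ncard ↔
      binaryDigit x k = 1) := by
  set f : ℤ := ⌊(2:ℝ)^k * x⌋ with hf
  have hpow : (0:ℝ) < (2:ℝ)^k := by positivity
  have hSeq : {v : ℤ | 0 < v ∧ ∃ x0 : ℤ, 0 < x0 ∧ ∃ xs : Fin m → ℤ, (∀ i, 0 < xs i) ∧
        x0 * (1 - (MvPolynomial.eval (Fin.cons (k:ℤ) (Fin.cons x0 xs)) D)^2) = v}
      = Set.Icc 1 f := by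
    ext v
    simp only [Set.mem_setOf_eq, Set.mem_Icc]
    constructor
    · rintro ⟨hv, x0, hx0p, xs, hxs, heq⟩
      have hd : MvPolynomial.eval (Fin.cons (k:ℤ) (Fin.cons x0 xs)) D = 0 := by
        by_contra hne
        have h1 : 1 ≤ (MvPolynomial.eval (Fin.cons (k:ℤ) (Fin.cons x0 xs)) D)^2 := by
          have := Int.one_le_abs hne
          nlinarith [sq_abs (MvPolynomial.eval (Fin.cons (k:ℤ) (Fin.cons x0 xs)) D)]
        nlinarith
      have hveq : v = x0 := by rw [hd] at heq; simpa using heq.symm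
      subst hveq
      have hN : ((v.toNat : ℤ)) = v := Int.toNat_of_nonneg hv.le
      have hlt : ((v.toNat : ℕ) : ℝ)/2^k < x := by
        apply (hD k v.toNat hk (by omega)).mp
        exact ⟨xs, hxs, by rw [hN]; exact hd⟩
      have hlt' : (v : ℝ) < 2^k * x := by
        have : ((v.toNat : ℕ) : ℝ) = (v : ℝ) := by exact_mod_cast congrArg Int.cast hN
        rw [this] at hlt
        rw [div_lt_iff₀ hpow] at hlt
        linarith [hlt]
      exact ⟨hv, Int.le_floor.mpr hlt'.le⟩
    · rintro ⟨hv1, hvf⟩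
      have hvR : (v : ℝ) ≤ 2^k * x := Int.le_floor.mp hvf
      have hvR' : (v : ℝ) < 2^k * x := lt_of_le_of_ne hvR (fun h => hni v h.symm)
      have hN : ((v.toNat : ℤ)) = v := Int.toNat_of_nonneg (by omega)
      obtain ⟨xs, hxs, hd⟩ := (hD k v.toNat hk (by omega)).mpr (by
        rw [div_lt_iff₀ hpow]
        have : ((v.toNat : ℕ) : ℝ) = (v : ℝ) := by exact_mod_cast congrArg Int.cast hN
        rw [this]; linarith)
      rw [hN] at hd
      exact ⟨by omega, v, by omega, xs, hxs, by rw [hd]; ring⟩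
  rw [hSeq]
  have hflt : f < 2^k := by
    apply Int.floor_lt.mpr
    push_cast
    nlinarith
  have hf0 : 0 ≤ f := Int.floor_nonneg.mpr (by positivity)
  have hncard : (Set.Icc (1:ℤ) f).ncard = f.toNat := by
    rw [← Finset.coe_Icc, Set.ncard_coe_finset, Int.card_Icc]
    omega
  refine ⟨Set.Icc_subset_Icc le_rfl (by omega), ?_, ?_⟩
  · rw [hncard]
    have : (2:ℤ)^k = ((2^k : ℕ) : ℤ) := by push_cast; ring
    omega
  · rw [hncard]
    have hodd : Odd f.toNat ↔ Odd f := by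
      rw [Int.odd_iff, Nat.odd_iff]; omega
    rw [hodd, Int.odd_iff]
    unfold binaryDigit
    rw [← hf]
end

section
/- Let f : ℕ → ℕ → (Fin m → ℕ) → ℤ be any function, and let x be a real number with 0 < x < 1. Suppose the representation is singlefold: for all positive integers k and N, the set of tuples of positive integers (x_1, …, x_m) with f(k, N, x_1, …, x_m) = 0 has exactly one element if (N : ℝ)/2^k < x, and is empty otherwise. Then for every positive integer k with 2^k·x not an integer, the set of tuples of positive integers (x_0, x_1, …, x_m) with f(k, x_0, x_1, …, x_m) = 0 is finite, has fewer than 2^k elements, the values of x_0 occurring in these solutions are distinct elements of {1, …, 2^k − 1}, and the number of such solution tuples is odd if and only if the k-th binary digit of x equals 1. -/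
theorem singlefold_solutions_parity (m : ℕ) (f : ℕ → ℕ → (Fin m → ℕ) → ℤ)
    (x : ℝ) (hx0 : 0 < x) (hx1 : x < 1)
    (hsf : ∀ k N : ℕ, 0 < k → 0 < N →
      (((N:ℝ)/2^k < x →
          ∃ a : Fin m → ℕ, {xs : Fin m → ℕ | (∀ i, 0 < xs i) ∧ f k N xs = 0} = {a}) ∧
        (¬ (N:ℝ)/2^k < x →
          {xs : Fin m → ℕ | (∀ i, 0 < xs i) ∧ f k N xs = 0} = ∅)))
    (k : ℕ) (hk : 0 < k) (hni : ∀ n : ℤ, (2:ℝ)^k * x ≠ (n:ℝ)) :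
    {p : ℕ × (Fin m → ℕ) | 0 < p.1 ∧ (∀ i, 0 < p.2 i) ∧ f k p.1 p.2 = 0}.Finite ∧
    {p : ℕ × (Fin m → ℕ) | 0 < p.1 ∧ (∀ i, 0 < p.2 i) ∧ f k p.1 p.2 = 0}.ncard < 2^k ∧
    (∀ p ∈ {p : ℕ × (Fin m → ℕ) | 0 < p.1 ∧ (∀ i, 0 < p.2 i) ∧ f k p.1 p.2 = 0},
      1 ≤ p.1 ∧ p.1 ≤ 2^k - 1) ∧
    (Set.InjOn (fun p : ℕ × (Fin m → ℕ) => p.1)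
      {p : ℕ × (Fin m → ℕ) | 0 < p.1 ∧ (∀ i, 0 < p.2 i) ∧ f k p.1 p.2 = 0}) ∧
    (Odd {p : ℕ × (Fin m → ℕ) | 0 < p.1 ∧ (∀ i, 0 < p.2 i) ∧ f k p.1 p.2 = 0}.ncard ↔
      binaryDigit x k = 1) := by
  classical
  have h2k : (0:ℝ) < 2^k := by positivity
  set y := (2:ℝ)^k * x with hy
  have hy0 : 0 < y := by positivity
  have hfl0 : 0 ≤ ⌊y⌋ := Int.floor_nonneg.2 hy0.le
  set M := ⌊y⌋.toNat with hMdef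
  have hMfl : (M:ℤ) = ⌊y⌋ := Int.toNat_of_nonneg hfl0
  have hMlt : M < 2^k := by
    have h1 : ⌊y⌋ < (2:ℤ)^k := by
      apply Int.floor_lt.2
      push_cast
      calc y = 2^k * x := rfl
        _ < 2^k * 1 := by exact mul_lt_mul_of_pos_left hx1 h2k
        _ = 2^k := mul_one _
    rw [← hMfl] at h1
    exact_mod_cast h1
  have hkey : ∀ N : ℕ, ((N:ℝ)/2^k < x ↔ N ≤ M) := by
    intro N
    rw [div_lt_iff₀ h2k]
    constructor
    · intro h
      have h2 : (N:ℤ) ≤ ⌊y⌋ := by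
        apply Int.le_floor.2
        push_cast
        rw [hy, mul_comm]
        exact h.le
      rw [← hMfl] at h2
      exact_mod_cast h2
    · intro h
      have h2 : (N:ℝ) ≤ y := by
        apply Int.le_floor.1
        rw [← hMfl]
        exact_mod_cast h
      have h3 : (N:ℝ) ≠ y := fun h' => hni (N:ℤ) (by push_cast; exact h'.symm)
      have := lt_of_le_of_ne h2 h3
      rw [hy, mul_comm] at this
      exact this
  have hex : ∀ N : ℕ, 1 ≤ N → N ≤ M →
      ∃ a, {xs : Fin m → ℕ | (∀ i, 0 < xs i) ∧ f k N xs = 0} = {a} :=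
    fun N h1 h2 => (hsf k N hk h1).1 ((hkey N).2 h2)
  choose g hg using hex
  set G : ℕ → (Fin m → ℕ) := fun N =>
    if h : 1 ≤ N ∧ N ≤ M then g N h.1 h.2 else fun _ => 0 with hGdef
  have hGeq : ∀ N (h1 : 1 ≤ N) (h2 : N ≤ M), G N = g N h1 h2 := by
    intro N h1 h2
    simp only [hGdef, dif_pos (And.intro h1 h2)]
  set S := {p : ℕ × (Fin m → ℕ) | 0 < p.1 ∧ (∀ i, 0 < p.2 i) ∧ f k p.1 p.2 = 0} with hS
  have hSchar : S = (fun N => (N, G N)) '' Set.Icc 1 M := by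
    ext p
    constructor
    · rintro ⟨hp1, hp2, hp3⟩
      have hne : p.2 ∈ {xs : Fin m → ℕ | (∀ i, 0 < xs i) ∧ f k p.1 xs = 0} := ⟨hp2, hp3⟩
      have hlt : (p.1:ℝ)/2^k < x := by
        by_contra hc
        rw [(hsf k p.1 hk hp1).2 hc] at hne
        exact hne
      have hle : p.1 ≤ M := (hkey p.1).1 hlt
      refine ⟨p.1, ⟨hp1, hle⟩, ?_⟩
      have h2 : p.2 = g p.1 hp1 hle := by
        rw [hg p.1 hp1 hle] at hne
        exact hne
      show (p.1, G p.1) = p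
      rw [hGeq p.1 hp1 hle]
      exact Prod.ext rfl h2.symm
    · rintro ⟨N, ⟨h1, h2⟩, rfl⟩
      have : g N h1 h2 ∈ {xs : Fin m → ℕ | (∀ i, 0 < xs i) ∧ f k N xs = 0} := by
        rw [hg N h1 h2]; rfl
      obtain ⟨ha, hb⟩ := this
      refine ⟨h1, ?_, ?_⟩ <;> simp only [hGeq N h1 h2] <;> assumption
  have hinjG : Function.Injective (fun N : ℕ => (N, G N)) :=
    fun a b h => congrArg Prod.fst h
  have hfin : S.Finite := by
    rw [hSchar]
    exact (Set.finite_Icc 1 M).image _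
  have hncard : S.ncard = M := by
    rw [hSchar, Set.ncard_image_of_injective _ hinjG]
    rw [← Finset.coe_Icc, Set.ncard_coe_finset, Nat.card_Icc]
    omega
  refine ⟨hfin, ?_, ?_, ?_, ?_⟩
  · rw [hncard]; exact hMlt
  · intro p hp
    rw [hSchar] at hp
    obtain ⟨N, ⟨h1, h2⟩, rfl⟩ := hp
    refine ⟨h1, ?_⟩
    show N ≤ 2^k - 1
    omega
  · intro p hp q hq hpq
    rw [hSchar] at hp hq
    obtain ⟨N, _, rfl⟩ := hp
    obtain ⟨N', _, rfl⟩ := hq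
    simp only at hpq
    subst hpq
    rfl
  · rw [hncard, Nat.odd_iff]
    unfold binaryDigit
    rw [← hy, ← hMfl]
    omega
end

section
/- Let (x_N) be a monotone nondecreasing sequence of rational numbers converging to a real number x with 0 < x < 1, and let f : ℕ → ℕ → (Fin m → ℕ) → ℤ be any function. Suppose the representation is singlefold: for all positive integers k and N, the set of tuples of positive integers (x_1, …, x_m) with f(k, N, x_1, …, x_m) = 0 has exactly one element if the k-th binary digit of x_N equals 1, and is empty otherwise. Then for every positive integer k with 2^k·x not an integer, the set of tuples of positive integers (x_0, x_1, …, x_m) with f(k, x_0, x_1, …, x_m) = 0 is infinite if and only if the k-th binary digit of x equals 1 (and finite if and only if that digit equals 0). -/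
theorem singlefold_solutions_finitude (x_ : ℕ → ℚ) (hmono : Monotone x_)
    (x : ℝ) (hlim : Filter.Tendsto (fun N => ((x_ N : ℝ))) Filter.atTop (nhds x))
    (hx0 : 0 < x) (hx1 : x < 1)
    (m : ℕ) (f : ℕ → ℕ → (Fin m → ℕ) → ℤ)
    (hsf : ∀ k N : ℕ, 0 < k → 0 < N →
      ((binaryDigit (x_ N : ℝ) k = 1 →
          ∃ a : Fin m → ℕ, {xs : Fin m → ℕ | (∀ i, 0 < xs i) ∧ f k N xs = 0} = {a}) ∧
        (binaryDigit (x_ N : ℝ) k ≠ 1 →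
          {xs : Fin m → ℕ | (∀ i, 0 < xs i) ∧ f k N xs = 0} = ∅)))
    (k : ℕ) (hk : 0 < k) (hni : ∀ n : ℤ, (2:ℝ)^k * x ≠ (n:ℝ)) :
    ({p : ℕ × (Fin m → ℕ) | 0 < p.1 ∧ (∀ i, 0 < p.2 i) ∧ f k p.1 p.2 = 0}.Infinite ↔
      binaryDigit x k = 1) ∧
    ({p : ℕ × (Fin m → ℕ) | 0 < p.1 ∧ (∀ i, 0 < p.2 i) ∧ f k p.1 p.2 = 0}.Finite ↔
      binaryDigit x k = 0) := by
  set S := {p : ℕ × (Fin m → ℕ) | 0 < p.1 ∧ (∀ i, 0 < p.2 i) ∧ f k p.1 p.2 = 0} with hS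
  set F : ℤ := ⌊(2:ℝ)^k * x⌋ with hF
  -- x_N ≤ x
  have hmono' : Monotone (fun N => ((x_ N : ℝ))) := by
    intro a b hab
    simp only [Rat.cast_le]
    exact hmono hab
  have hle : ∀ N, ((x_ N : ℝ)) ≤ x := fun N => hmono'.ge_of_tendsto hlim N
  have hlt : (F : ℝ) < (2:ℝ)^k * x :=
    (Int.floor_le _).lt_of_ne (fun h => hni F h.symm)
  have hlim' : Filter.Tendsto (fun N => (2:ℝ)^k * (x_ N : ℝ)) Filter.atTop
      (nhds ((2:ℝ)^k * x)) := hlim.const_mul _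
  have hev : ∀ᶠ N in Filter.atTop, (F : ℝ) < (2:ℝ)^k * (x_ N : ℝ) :=
    hlim'.eventually_const_lt hlt
  obtain ⟨N0, hN0⟩ := Filter.eventually_atTop.mp hev
  -- for N ≥ N0, the floors agree, hence the digits agree
  have hfloor : ∀ N, N0 ≤ N → ⌊(2:ℝ)^k * (x_ N : ℝ)⌋ = F := by
    intro N hN
    refine Int.floor_eq_iff.mpr ⟨le_of_lt (hN0 N hN), ?_⟩
    have h1 : (2:ℝ)^k * (x_ N : ℝ) ≤ (2:ℝ)^k * x :=
      mul_le_mul_of_nonneg_left (hle N) (by positivity)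
    have h2 : (2:ℝ)^k * x < F + 1 := Int.lt_floor_add_one _
    push_cast
    linarith
  have hdig : ∀ N, N0 ≤ N → binaryDigit ((x_ N : ℝ)) k = binaryDigit x k := by
    intro N hN
    unfold binaryDigit
    rw [hfloor N hN]
  have hd01 : binaryDigit x k = 0 ∨ binaryDigit x k = 1 := by
    unfold binaryDigit; omega
  rcases hd01 with hd | hd
  · -- digit is 0: finitely many solutions
    have hfin : S.Finite := by
      have hsub : S ⊆ ⋃ N ∈ Finset.Icc 1 N0,
          (fun xs => (N, xs)) '' {xs : Fin m → ℕ | (∀ i, 0 < xs i) ∧ f k N xs = 0} := by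
        rintro ⟨N, xs⟩ ⟨hN, hxs, hf⟩
        have hNle : N ≤ N0 := by
          by_contra hge
          have h1 : N0 ≤ N := by omega
          have hemp := (hsf k N hk hN).2 (by rw [hdig N h1, hd]; norm_num)
          have hmem : xs ∈ ({xs : Fin m → ℕ | (∀ i, 0 < xs i) ∧ f k N xs = 0}) := ⟨hxs, hf⟩
          rw [hemp] at hmem
          exact hmem
        exact Set.mem_biUnion (Finset.mem_Icc.mpr ⟨hN, hNle⟩) ⟨xs, ⟨hxs, hf⟩, rfl⟩
      refine Set.Finite.subset ?_ hsub
      refine Set.Finite.biUnion (Finset.Icc 1 N0).finite_toSet ?_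
      intro N hNmem
      have hN : 0 < N := (Finset.mem_Icc.mp hNmem).1
      refine Set.Finite.image _ ?_
      rcases Classical.em (binaryDigit ((x_ N : ℝ)) k = 1) with h | h
      · obtain ⟨a, ha⟩ := (hsf k N hk hN).1 h
        rw [ha]; exact Set.finite_singleton a
      · rw [(hsf k N hk hN).2 h]; exact Set.finite_empty
    refine ⟨⟨fun hi => absurd hfin hi, fun h1 => by rw [hd] at h1; norm_num at h1⟩,
      ⟨fun _ => hd, fun _ => hfin⟩⟩
  · -- digit is 1: infinitely many solutions
    have hinf : S.Infinite := by
      have hsol : ∀ N, N0 + 1 ≤ N → ∃ a : Fin m → ℕ,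
          {xs : Fin m → ℕ | (∀ i, 0 < xs i) ∧ f k N xs = 0} = {a} := by
        intro N hN
        exact (hsf k N hk (by omega)).1 (by rw [hdig N (by omega), hd])
      choose a ha using hsol
      refine Set.infinite_of_injective_forall_mem
        (f := fun n : ℕ => ((N0 + 1 + n, a (N0 + 1 + n) (by omega)) : ℕ × (Fin m → ℕ))) ?_ ?_
      · intro i j hij
        have : N0 + 1 + i = N0 + 1 + j := congrArg Prod.fst hij
        omega
      · intro n
        have hn : N0 + 1 ≤ N0 + 1 + n := by omega
        have hmem : a (N0 + 1 + n) (by omega) ∈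
            {xs : Fin m → ℕ | (∀ i, 0 < xs i) ∧ f k (N0 + 1 + n) xs = 0} := by
          rw [ha (N0 + 1 + n) hn]; rfl
        refine ⟨?_, hmem.1, hmem.2⟩
        show 0 < N0 + 1 + n
        omega
    refine ⟨⟨fun _ => hd, fun _ => hinf⟩, ⟨fun hf => absurd hf hinf, fun h0 => by rw [hd] at h0; norm_num at h0⟩⟩
end

section
/- Let (x_N) be a monotone nondecreasing sequence of rational numbers converging to a real number x with 0 < x < 1, and let D be a polynomial with integer coefficients in the m+2 variables k, x_0, x_1, …, x_m. Suppose that for all positive integers k and N: there exist positive integers x_1, …, x_m with D(k, N, x_1, …, x_m) = 0 if and only if the k-th binary digit of x_N equals 1. Define P(x_0, …, x_m) = x_0·(1 − D(k, x_0, x_1, …, x_m)^2). Then for every positive integer k with 2^k·x not an integer, the set of positive integer values assumed by P as x_0, …, x_m range over positive integers is infinite if and only if the k-th binary digit of x equals 1. -/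
theorem polynomial_positive_values_finitude (x_ : ℕ → ℚ) (hmono : Monotone x_)
    (x : ℝ) (hlim : Filter.Tendsto (fun N => ((x_ N : ℝ))) Filter.atTop (nhds x))
    (hx0 : 0 < x) (hx1 : x < 1)
    (m : ℕ) (D : MvPolynomial (Fin (m+2)) ℤ)
    (hD : ∀ k N : ℕ, 0 < k → 0 < N →
      ((∃ xs : Fin m → ℤ, (∀ i, 0 < xs i) ∧
          MvPolynomial.eval (Fin.cons (k:ℤ) (Fin.cons (N:ℤ) xs)) D = 0) ↔
        binaryDigit (x_ N : ℝ) k = 1))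
    (k : ℕ) (hk : 0 < k) (hni : ∀ n : ℤ, (2:ℝ)^k * x ≠ (n:ℝ)) :
    {v : ℤ | 0 < v ∧ ∃ x0 : ℤ, 0 < x0 ∧ ∃ xs : Fin m → ℤ, (∀ i, 0 < xs i) ∧
        x0 * (1 - (MvPolynomial.eval (Fin.cons (k:ℤ) (Fin.cons x0 xs)) D)^2) = v}.Infinite
      ↔ binaryDigit x k = 1 := by
  classical
  have hmono' : Monotone (fun N => ((x_ N : ℝ))) := fun a b h =>
    Rat.cast_le.mpr (hmono h)
  have hxle : ∀ N, ((x_ N : ℝ)) ≤ x := fun N => hmono'.ge_of_tendsto hlim N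
  have h1 : ((⌊(2:ℝ)^k * x⌋ : ℝ)) < (2:ℝ)^k * x :=
    lt_of_le_of_ne (Int.floor_le _) (fun h => hni ⌊(2:ℝ)^k * x⌋ h.symm)
  have h2 : Filter.Tendsto (fun N => (2:ℝ)^k * (x_ N : ℝ)) Filter.atTop
      (nhds ((2:ℝ)^k * x)) := hlim.const_mul _
  have hev : ∀ᶠ N in Filter.atTop, ⌊(2:ℝ)^k * (x_ N : ℝ)⌋ = ⌊(2:ℝ)^k * x⌋ := by
    filter_upwards [h2.eventually_const_lt h1] with N hN
    have hle : (2:ℝ)^k * (x_ N : ℝ) ≤ (2:ℝ)^k * x :=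
      mul_le_mul_of_nonneg_left (hxle N) (by positivity)
    rw [Int.floor_eq_iff]
    exact ⟨hN.le, lt_of_le_of_lt hle (Int.lt_floor_add_one _)⟩
  obtain ⟨N0, hN0⟩ := Filter.eventually_atTop.mp hev
  -- digits stabilize
  have hbdN : ∀ N, N0 ≤ N → binaryDigit ((x_ N : ℚ) : ℝ) k = binaryDigit x k := by
    intro N hN
    unfold binaryDigit
    rw [hN0 N hN]
  -- characterize membership in the set
  have hS : ∀ v : ℤ, (0 < v ∧ ∃ x0 : ℤ, 0 < x0 ∧ ∃ xs : Fin m → ℤ, (∀ i, 0 < xs i) ∧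
      x0 * (1 - (MvPolynomial.eval (Fin.cons (k:ℤ) (Fin.cons x0 xs)) D)^2) = v)
      ↔ (0 < v ∧ ∃ xs : Fin m → ℤ, (∀ i, 0 < xs i) ∧
          MvPolynomial.eval (Fin.cons (k:ℤ) (Fin.cons v xs)) D = 0) := by
    intro v
    constructor
    · rintro ⟨hv, x0, hx0', xs, hxs, heq⟩
      have hd : MvPolynomial.eval (Fin.cons (k:ℤ) (Fin.cons x0 xs)) D = 0 := by
        by_contra hd
        have hsq : 0 < (MvPolynomial.eval (Fin.cons (k:ℤ) (Fin.cons x0 xs)) D)^2 := by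
          positivity
        have hsq1 : 1 ≤ (MvPolynomial.eval (Fin.cons (k:ℤ) (Fin.cons x0 xs)) D)^2 := hsq
        nlinarith
      have hveq : x0 = v := by rw [hd] at heq; simpa using heq
      subst hveq
      exact ⟨hv, xs, hxs, hd⟩
    · rintro ⟨hv, xs, hxs, hd⟩
      exact ⟨hv, v, hv, xs, hxs, by rw [hd]; ring⟩
  constructor
  · intro hinf
    have hnot : ¬ {v : ℤ | 0 < v ∧ ∃ x0 : ℤ, 0 < x0 ∧ ∃ xs : Fin m → ℤ, (∀ i, 0 < xs i) ∧
        x0 * (1 - (MvPolynomial.eval (Fin.cons (k:ℤ) (Fin.cons x0 xs)) D)^2) = v}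
        ⊆ Set.Icc 0 ((N0 : ℤ) + 1) := fun hsub =>
      hinf ((Set.finite_Icc _ _).subset hsub)
    rw [Set.not_subset] at hnot
    obtain ⟨v, hvS, hvnot⟩ := hnot
    obtain ⟨hv, xs, hxs, hd⟩ := (hS v).mp hvS
    have hvgt : (N0 : ℤ) + 1 < v := by
      simp only [Set.mem_Icc, not_and, not_le] at hvnot
      exact hvnot hv.le
    set N : ℕ := v.toNat with hNdef
    have hNv : (N : ℤ) = v := Int.toNat_of_nonneg hv.le
    have hNpos : 0 < N := by omega
    have hNge : N0 ≤ N := by omega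
    have hdig : binaryDigit ((x_ N : ℚ) : ℝ) k = 1 := by
      apply (hD k N hk hNpos).mp
      exact ⟨xs, hxs, by rw [hNv]; exact hd⟩
    rw [hbdN N hNge] at hdig
    exact hdig
  · intro hbd
    apply Set.infinite_of_injective_forall_mem
      (f := fun n : ℕ => ((N0 + 1 + n : ℕ) : ℤ))
    · intro a b hab
      simpa using hab
    · intro n
      have hNpos : 0 < N0 + 1 + n := by omega
      have hdig : binaryDigit ((x_ (N0 + 1 + n) : ℚ) : ℝ) k = 1 := by
        rw [hbdN (N0 + 1 + n) (by omega)]; exact hbd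
      obtain ⟨xs, hxs, hd⟩ := (hD k (N0 + 1 + n) hk hNpos).mpr hdig
      exact (hS _).mpr ⟨by exact_mod_cast hNpos, xs, hxs, hd⟩
end
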